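/- For each k ∈ ℕ, A_k factorizes as A_k = x^{-2}(D-1)(D+k-1)(D+k-2) B_k, where B_k := x(D+k-2) + D = (x+1)^{3-k} D (x+1)^{k-2}, as operators on smooth functions on (0,∞). -/

import Mathlib

/-- The first-order operator `D - c`, where `D = x ∂ₓ`. -/
noncomputable def Sop (c : ℝ) (f : ℝ → ℝ) : ℝ → ℝ := fun x => x * deriv f x - c * f x

/-- `A_k = x⁻¹ p_k(D) + x⁻² q_k(D)` with `p_k(ζ) = ζ(ζ+k)(ζ-(1-k))(ζ-(2-k))` and
`q_k(ζ) = ζ(ζ-1)(ζ-(1-k))(ζ-(2-k))`. -/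
noncomputable def Ak (k : ℕ) (f : ℝ → ℝ) : ℝ → ℝ := fun x =>
  x⁻¹ * Sop 0 (Sop (-(k : ℝ)) (Sop (1 - (k : ℝ)) (Sop (2 - (k : ℝ)) f))) x +
  (x ^ 2)⁻¹ * Sop 0 (Sop 1 (Sop (1 - (k : ℝ)) (Sop (2 - (k : ℝ)) f))) x

/-- `B_k = x(D+k-2) + D`. -/
noncomputable def Bk (k : ℕ) (f : ℝ → ℝ) : ℝ → ℝ := fun x =>
  x * (x * deriv f x + ((k : ℝ) - 2) * f x) + x * deriv f x

open Set Function

private lemma cd_deriv {g : ℝ → ℝ} (hg : ContDiffOn ℝ (⊤ : ℕ∞) g (Ioi 0)) :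
    ContDiffOn ℝ (⊤ : ℕ∞) (deriv g) (Ioi 0) :=
  hg.deriv_of_isOpen isOpen_Ioi (by simp)

private lemma cd_iter {g : ℝ → ℝ} (hg : ContDiffOn ℝ (⊤ : ℕ∞) g (Ioi 0)) (n : ℕ) :
    ContDiffOn ℝ (⊤ : ℕ∞) (deriv^[n] g) (Ioi 0) := by
  induction n with
  | zero => exact hg
  | succ n ih => rw [Function.iterate_succ_apply' deriv n g]; exact cd_deriv ih

private lemma dAt {g : ℝ → ℝ} (hg : ContDiffOn ℝ (⊤ : ℕ∞) g (Ioi 0)) {x : ℝ} (hx : x ∈ Ioi (0:ℝ)) :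
    DifferentiableAt ℝ g x :=
  (hg.contDiffAt (isOpen_Ioi.mem_nhds hx)).differentiableAt (by simp)

private lemma derivCongr {F G : ℝ → ℝ} (h : ∀ y ∈ Ioi (0:ℝ), F y = G y) {x : ℝ}
    (hx : x ∈ Ioi (0:ℝ)) : deriv F x = deriv G x :=
  Filter.EventuallyEq.deriv_eq (Filter.eventuallyEq_of_mem (isOpen_Ioi.mem_nhds hx) h)

private lemma mulx_iter {g : ℝ → ℝ} (hg : ContDiffOn ℝ (⊤ : ℕ∞) g (Ioi 0)) (n : ℕ) :
    ∀ x ∈ Ioi (0:ℝ), deriv^[n] (fun y => y * g y) x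
      = x * deriv^[n] g x + (n : ℝ) * deriv^[n-1] g x := by
  induction n with
  | zero => intro x _; simp
  | succ n ih =>
    intro x hx
    have h1 : DifferentiableAt ℝ (deriv^[n] g) x := dAt (cd_iter hg n) hx
    have h2 : DifferentiableAt ℝ (deriv^[n-1] g) x := dAt (cd_iter hg (n-1)) hx
    have h3 : (n:ℝ) * deriv (deriv^[n-1] g) x = (n:ℝ) * deriv^[n] g x := by
      cases n with
      | zero => simp
      | succ m => rw [Nat.add_sub_cancel, ← Function.iterate_succ_apply' deriv m g]
    rw [Function.iterate_succ_apply' deriv n, derivCongr ih hx,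
      deriv_fun_add (differentiableAt_fun_id.fun_mul h1) (h2.const_mul _),
      deriv_fun_mul differentiableAt_fun_id h1, deriv_id'', deriv_const_mul _ h2, h3,
      ← Function.iterate_succ_apply' deriv n g, Nat.add_sub_cancel]
    push_cast
    ring

private lemma smul_iter {g : ℝ → ℝ} (hg : ContDiffOn ℝ (⊤ : ℕ∞) g (Ioi 0)) (c : ℝ) (n : ℕ) :
    ∀ x ∈ Ioi (0:ℝ), deriv^[n] (fun y => c * g y) x = c * deriv^[n] g x := by
  induction n with
  | zero => intro x _; simp
  | succ n ih =>
    intro x hx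
    rw [Function.iterate_succ_apply' deriv n, derivCongr ih hx,
      deriv_const_mul c (dAt (cd_iter hg n) hx), ← Function.iterate_succ_apply' deriv n g]

private lemma add_iter {g h : ℝ → ℝ} (hg : ContDiffOn ℝ (⊤ : ℕ∞) g (Ioi 0))
    (hh : ContDiffOn ℝ (⊤ : ℕ∞) h (Ioi 0)) (n : ℕ) :
    ∀ x ∈ Ioi (0:ℝ), deriv^[n] (fun y => g y + h y) x = deriv^[n] g x + deriv^[n] h x := by
  induction n with
  | zero => intro x _; simp
  | succ n ih =>
    intro x hx
    rw [Function.iterate_succ_apply' deriv n, derivCongr ih hx,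
      deriv_fun_add (dAt (cd_iter hg n) hx) (dAt (cd_iter hh n) hx),
      ← Function.iterate_succ_apply' deriv n g, ← Function.iterate_succ_apply' deriv n h]

private lemma cd_Sop {g : ℝ → ℝ} (hg : ContDiffOn ℝ (⊤ : ℕ∞) g (Ioi 0)) (c : ℝ) :
    ContDiffOn ℝ (⊤ : ℕ∞) (Sop c g) (Ioi 0) := by
  have h : Sop c g = fun y => y * deriv g y - c * g y := rfl
  rw [h]
  exact (contDiffOn_id.mul (cd_deriv hg)).sub (contDiffOn_const.mul hg)

private lemma Sop_iter {g : ℝ → ℝ} (hg : ContDiffOn ℝ (⊤ : ℕ∞) g (Ioi 0)) (c : ℝ) (n : ℕ) :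
    ∀ x ∈ Ioi (0:ℝ), deriv^[n] (Sop c g) x
      = x * deriv^[n+1] g x + ((n:ℝ) - c) * deriv^[n] g x := by
  intro x hx
  have hfun : Sop c g = fun y => y * deriv g y + (-c) * g y := by
    funext y
    show y * deriv g y - c * g y = y * deriv g y + (-c) * g y
    ring
  have c1 : ContDiffOn ℝ (⊤ : ℕ∞) (fun y => y * deriv g y) (Ioi 0) :=
    contDiffOn_id.mul (cd_deriv hg)
  have c2 : ContDiffOn ℝ (⊤ : ℕ∞) (fun y => (-c) * g y) (Ioi 0) := contDiffOn_const.mul hg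
  have h3 : (n:ℝ) * deriv^[n-1] (deriv g) x = (n:ℝ) * deriv^[n] g x := by
    cases n with
    | zero => simp
    | succ m => rw [Nat.add_sub_cancel, ← Function.iterate_succ_apply deriv m g]
  rw [hfun, add_iter c1 c2 n x hx, mulx_iter (cd_deriv hg) n x hx, smul_iter hg (-c) n x hx,
    h3, ← Function.iterate_succ_apply deriv n g]
  ring

private lemma Bk_eq (k : ℕ) (f : ℝ → ℝ) :
    Bk k f = fun y => y * Sop (2-(k:ℝ)) f y + Sop 0 f y := by
  funext y
  show y * (y * deriv f y + ((k:ℝ) - 2) * f y) + y * deriv f y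
    = y * (y * deriv f y - (2-(k:ℝ)) * f y) + (y * deriv f y - 0 * f y)
  ring

private lemma cd_Bk (k : ℕ) {f : ℝ → ℝ} (hf : ContDiffOn ℝ (⊤ : ℕ∞) f (Ioi 0)) :
    ContDiffOn ℝ (⊤ : ℕ∞) (Bk k f) (Ioi 0) := by
  rw [Bk_eq]
  exact (contDiffOn_id.mul (cd_Sop hf _)).add (cd_Sop hf 0)

private lemma Bk_iter (k : ℕ) {f : ℝ → ℝ} (hf : ContDiffOn ℝ (⊤ : ℕ∞) f (Ioi 0)) (n : ℕ) :
    ∀ x ∈ Ioi (0:ℝ), deriv^[n] (Bk k f) x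
      = x * (x * deriv^[n+1] f x + ((n:ℝ) - (2-(k:ℝ))) * deriv^[n] f x)
        + (n:ℝ) * (x * deriv^[n] f x + (((n:ℝ)-1) - (2-(k:ℝ))) * deriv^[n-1] f x)
        + (x * deriv^[n+1] f x + ((n:ℝ) - 0) * deriv^[n] f x) := by
  intro x hx
  have c1 : ContDiffOn ℝ (⊤ : ℕ∞) (fun y => y * Sop (2-(k:ℝ)) f y) (Ioi 0) :=
    contDiffOn_id.mul (cd_Sop hf _)
  have h3 : (n:ℝ) * deriv^[n-1] (Sop (2-(k:ℝ)) f) x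
      = (n:ℝ) * (x * deriv^[n] f x + (((n:ℝ)-1) - (2-(k:ℝ))) * deriv^[n-1] f x) := by
    cases n with
    | zero => simp
    | succ m =>
      rw [Nat.add_sub_cancel, Sop_iter hf _ m x hx]
      push_cast
      ring
  rw [Bk_eq, add_iter c1 (cd_Sop hf 0) n x hx, mulx_iter (cd_Sop hf _) n x hx,
    Sop_iter hf _ n x hx, Sop_iter hf 0 n x hx, h3]

/-- `A_k = x⁻² (D-1)(D+k-1)(D+k-2) B_k` and `B_k = (x+1)^(3-k) D (x+1)^(k-2)`
on smooth functions on `(0,∞)`. -/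
theorem stmt_14 (k : ℕ) (f : ℝ → ℝ) (hf : ContDiffOn ℝ (⊤ : ℕ∞) f (Set.Ioi 0)) :
    ∀ x : ℝ, 0 < x →
      Ak k f x =
        (x ^ 2)⁻¹ * Sop 1 (Sop (1 - (k : ℝ)) (Sop (2 - (k : ℝ)) (Bk k f))) x ∧
      Bk k f x =
        (x + 1) ^ ((3 : ℤ) - (k : ℤ)) *
          (x * deriv (fun y => (y + 1) ^ ((k : ℤ) - 2) * f y) x) := by
  intro x hx'
  have hx : x ∈ Ioi (0:ℝ) := hx'
  have hx0 : x ≠ 0 := ne_of_gt hx'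
  have hB := cd_Bk k hf
  have g1cd := cd_Sop hf (2-(k:ℝ))
  have g2cd := cd_Sop g1cd (1-(k:ℝ))
  have h1cd := cd_Sop hB (2-(k:ℝ))
  constructor
  · have Sval : ∀ (c : ℝ) (g : ℝ → ℝ), Sop c g x = x * deriv^[1] g x - c * deriv^[0] g x :=
      fun c g => rfl
    have E : ∀ (c : ℝ) (g : ℝ → ℝ), ContDiffOn ℝ (⊤ : ℕ∞) g (Ioi 0) → ∀ n : ℕ,
        deriv^[n] (Sop c g) x = x * deriv^[n+1] g x + ((n:ℝ) - c) * deriv^[n] g x :=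
      fun c g hg n => Sop_iter hg c n x hx
    have F := fun n => Bk_iter k hf n x hx
    simp only [Ak, Sval, E (-(k:ℝ)) _ g2cd, E 1 _ g2cd, E (1-(k:ℝ)) _ g1cd,
      E (2-(k:ℝ)) _ hf, E (1-(k:ℝ)) _ h1cd, E (2-(k:ℝ)) _ hB, F]
    norm_num
    field_simp
    ring
  · have hne : x + 1 ≠ 0 := by positivity
    have hf' : DifferentiableAt ℝ f x := dAt hf hx
    have h1 : HasDerivAt (fun y : ℝ => y + 1) 1 x := (hasDerivAt_id x).add_const 1
    have h2 : HasDerivAt (fun z : ℝ => z ^ ((k:ℤ)-2))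
        ((((k:ℤ)-2 : ℤ) : ℝ) * (x+1) ^ ((k:ℤ)-2-1)) (x+1) :=
      hasDerivAt_zpow _ _ (Or.inl hne)
    have hz : HasDerivAt (fun y : ℝ => (y+1) ^ ((k:ℤ)-2))
        (((((k:ℤ)-2 : ℤ) : ℝ) * (x+1) ^ ((k:ℤ)-2-1)) * 1) x := by have := HasDerivAt.comp x h2 h1; exact this
    have hD : HasDerivAt (fun y => (y + 1) ^ ((k:ℤ) - 2) * f y)
        ((((((k:ℤ)-2 : ℤ) : ℝ) * (x+1) ^ ((k:ℤ)-2-1)) * 1) * f x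
          + (x+1) ^ ((k:ℤ)-2) * deriv f x) x := hz.mul hf'.hasDerivAt
    have hder : deriv (fun y => (y + 1) ^ ((k:ℤ) - 2) * f y) x
        = ((k:ℝ)-2) * (x+1) ^ ((k:ℤ)-3) * f x + (x+1) ^ ((k:ℤ)-2) * deriv f x := by
      have e1 : (k:ℤ)-2-1 = (k:ℤ)-3 := by ring
      rw [hD.deriv, e1]
      push_cast
      ring
    have h0 : (x+1) ^ ((3:ℤ)-(k:ℤ)) * (x+1) ^ ((k:ℤ)-3) = 1 := by
      rw [← zpow_add₀ hne, show (3:ℤ)-(k:ℤ)+((k:ℤ)-3) = 0 from by ring, zpow_zero]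
    have h1' : (x+1) ^ ((3:ℤ)-(k:ℤ)) * (x+1) ^ ((k:ℤ)-2) = x+1 := by
      rw [← zpow_add₀ hne, show (3:ℤ)-(k:ℤ)+((k:ℤ)-2) = 1 from by ring, zpow_one]
    rw [hder]
    show x * (x * deriv f x + ((k:ℝ) - 2) * f x) + x * deriv f x = _
    linear_combination (-(((k:ℝ))-2) * x * f x) * h0 + (-(x * deriv f x)) * h1'
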